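/- If R is central reduced, then R is weakly semicommutative: for all a, b ∈ R with ab = 0 and all r ∈ R, the element arb is nilpotent (indeed (arb)^2 = 0). -/

import Mathlib

/-- A ring is central reduced if every nilpotent element is central. -/
def IsCentralReduced (R : Type*) [Ring R] : Prop :=
  ∀ a : R, IsNilpotent a → a ∈ Set.center R

section MonoidWithZero

variable {M : Type*} [MonoidWithZero M] {a b : M}

theorem sq_mul_swap_eq_zero_of_mul_eq_zero (hab : a * b = 0) : (b * a) ^ 2 = 0 := by
  rw [sq, mul_assoc, ← mul_assoc a, hab, zero_mul, mul_zero]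

theorem sq_mul_mul_eq_zero_of_mul_eq_zero (hab : a * b = 0) (hba : b * a ∈ Set.center M) (r : M) :
    (a * r * b) ^ 2 = 0 := by
  have hcomm : r * (b * a) = b * a * r := Semigroup.mem_center_iff.mp hba r
  calc (a * r * b) ^ 2 = a * r * (b * a * r) * b := by simp only [sq, mul_assoc]
    _ = a * r * r * b * (a * b) := by rw [← hcomm]; simp only [mul_assoc]
    _ = 0 := by rw [hab, mul_zero]

end MonoidWithZero

theorem stmt_6 (R : Type*) [Ring R] (hcr : IsCentralReduced R) :
    ∀ a b : R, a * b = 0 → ∀ r : R, (a * r * b) ^ 2 = 0 ∧ IsNilpotent (a * r * b) := by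
  intro a b hab r
  have hba : b * a ∈ Set.center R := hcr _ ⟨2, sq_mul_swap_eq_zero_of_mul_eq_zero hab⟩
  have hsq := sq_mul_mul_eq_zero_of_mul_eq_zero hab hba r
  exact ⟨hsq, 2, hsq⟩
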